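/- Let T > 0, n ∈ ℕ, p ∈ [1,∞) and σ > 0. Let D ⊆ L^p((0,T);ℝⁿ) be a nonempty set such that (D1) every u ∈ D has a representative v : (0,T) → ℝⁿ with v(t) ∈ {0,1}ⁿ for all t ∈ (0,T) and Σ_{j=1}^n Var(v_j;(0,T)) ≤ σ, where Var denotes the pointwise total variation (supremum over finite partitions), and (D2) D is closed in L^p((0,T);ℝⁿ). Then every lower semicontinuous function f : L^p((0,T);ℝⁿ) → ℝ attains a global minimum over D, i.e., there exists u* ∈ D with f(u*) ≤ f(u) for all u ∈ D. -/

import Mathlib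

open MeasureTheory Set Filter Topology
open scoped ENNReal Finset

/-!
Cut `(0, T)` into `N` cells of length `T / N` and approximate a control by the step function
taking, on each cell, the value of the control at the midpoint. A binary control which is not
constant on a cell has variation at least `1` there, so the two functions differ on at most `σ`
cells, i.e. on a set of measure at most `σ T / N`, where their difference has norm at most `1`.
Hence the `L^p` distance is at most `(σ T / N) ^ (1 / p)`, and the finitely many binary step
functions on the grid form an `ε`-net of the admissible controls for `N` large. So the admissible
set is totally bounded, `D` is compact as a closed subset of it in the complete space `L^p`, and a
lower semicontinuous function attains its minimum on the nonempty compact set `D`.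
-/

lemma eLpNorm_le_measure_rpow_of_norm_le_indicator {α E : Type*} [MeasurableSpace α]
    [NormedAddCommGroup E] {μ : Measure α} {p : ℝ≥0∞} (hp0 : p ≠ 0) (hp : p ≠ ⊤)
    {f : α → E} {B : Set α} (hB : MeasurableSet B) (hf : ∀ᵐ t ∂μ, ‖f t‖ ≤ B.indicator 1 t) :
    eLpNorm f p μ ≤ μ B ^ (1 / p.toReal) := by
  calc eLpNorm f p μ ≤ eLpNorm (B.indicator fun _ => (1 : ℝ)) p μ := eLpNorm_mono_ae_real hf
    _ = μ B ^ (1 / p.toReal) := by simp [eLpNorm_indicator_const hB hp0 hp]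

lemma tendsto_ofReal_mul_div_rpow (a : ℝ≥0∞) (ha : a ≠ ⊤) (T : ℝ) {r : ℝ} (hr : 0 < r) :
    Tendsto (fun N : ℕ => (a * ENNReal.ofReal (T / N)) ^ r) atTop (𝓝 0) := by
  have h := ENNReal.Tendsto.const_mul
    (ENNReal.tendsto_ofReal (tendsto_const_div_atTop_nhds_zero_nat T)) (Or.inr ha)
  have h' := ((ENNReal.continuous_rpow_const (y := r)).tendsto _).comp h
  rwa [ENNReal.ofReal_zero, mul_zero, ENNReal.zero_rpow_of_pos hr] at h'

def binaryVectors (n : ℕ) : Set (Fin n → ℝ) := univ.pi fun _ => {0, 1}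

section BinaryVectors

variable {n : ℕ} {x y : Fin n → ℝ}

lemma mem_binaryVectors : x ∈ binaryVectors n ↔ ∀ j, x j = 0 ∨ x j = 1 := by
  simp [binaryVectors]

lemma zero_mem_binaryVectors : (0 : Fin n → ℝ) ∈ binaryVectors n :=
  mem_binaryVectors.2 fun _ => Or.inl rfl

lemma binaryVectors_finite : (binaryVectors n).Finite :=
  Finite.pi fun _ => toFinite _

lemma norm_sub_le_one_of_mem_binaryVectors (hx : x ∈ binaryVectors n)
    (hy : y ∈ binaryVectors n) : ‖x - y‖ ≤ 1 := by
  refine (pi_norm_le_iff_of_nonneg zero_le_one).2 fun j => ?_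
  rcases mem_binaryVectors.1 hx j with h | h <;> rcases mem_binaryVectors.1 hy j with h' | h' <;>
    simp [h, h']

lemma one_le_sum_edist_of_mem_binaryVectors (hx : x ∈ binaryVectors n)
    (hy : y ∈ binaryVectors n) (hxy : x ≠ y) : 1 ≤ ∑ j, edist (x j) (y j) := by
  obtain ⟨j, hj⟩ := Function.ne_iff.1 hxy
  have hedist : edist (x j) (y j) = 1 := by
    rcases mem_binaryVectors.1 hx j with h | h <;> rcases mem_binaryVectors.1 hy j with h' | h' <;>
      simp_all [edist_dist, Real.dist_eq]
  exact hedist.symm.le.trans <|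
    Finset.single_le_sum (f := fun j => edist (x j) (y j)) (fun _ _ => bot_le) (Finset.mem_univ j)

end BinaryVectors

lemma one_le_sum_eVariationOn_of_ne {n : ℕ} {v : ℝ → Fin n → ℝ} {S : Set ℝ}
    (hv : ∀ t ∈ S, v t ∈ binaryVectors n) {t τ : ℝ} (ht : t ∈ S) (hτ : τ ∈ S) (hne : v t ≠ v τ) :
    1 ≤ ∑ j, eVariationOn (fun s => v s j) S :=
  (one_le_sum_edist_of_mem_binaryVectors (hv t ht) (hv τ hτ) hne).trans <|
    Finset.sum_le_sum fun j _ => eVariationOn.edist_le (fun s => v s j) ht hτ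

def gridCell (δ : ℝ) (i : ℕ) : Set ℝ := Icc (i * δ) ((i + 1) * δ)

section Grid

variable {δ : ℝ}

lemma volume_gridCell (i : ℕ) : volume (gridCell δ i) = ENNReal.ofReal δ := by
  rw [gridCell, Real.volume_Icc]
  ring_nf

lemma mem_gridCell_floor (hδ : 0 < δ) {t : ℝ} (ht : 0 ≤ t) : t ∈ gridCell δ ⌊t / δ⌋₊ := by
  constructor
  · exact (le_div_iff₀ hδ).1 (Nat.floor_le (div_nonneg ht hδ.le))
  · exact ((div_le_iff₀ hδ).1 (Nat.lt_floor_add_one (t / δ)).le)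

lemma sum_eVariationOn_inter_gridCell {E : Type*} [PseudoEMetricSpace E] (f : ℝ → E) {T : ℝ}
    (hT : 0 < T) {N : ℕ} (hN : 0 < N) :
    ∑ i ∈ Finset.range N, eVariationOn f (Ioo 0 T ∩ gridCell (T / N) i) =
      eVariationOn f (Ioo 0 T) := by
  have hδ : 0 < T / N := div_pos hT (Nat.cast_pos.2 hN)
  have hmono : Monotone fun i : ℕ => (i : ℝ) * (T / N) := fun i k hik =>
    mul_le_mul_of_nonneg_right (Nat.cast_le.2 hik) hδ.le
  have hend : (N : ℝ) * (T / N) = T := mul_div_cancel₀ T (Nat.cast_ne_zero.2 hN.ne')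
  calc ∑ i ∈ Finset.range N, eVariationOn f (Ioo 0 T ∩ gridCell (T / N) i)
      = eVariationOn f (Ioo 0 T ∩ Icc ((0 : ℕ) * (T / N)) (N * (T / N))) := by
        refine Eq.trans ?_ (eVariationOn.sum f hmono fun i hi hiN => ⟨?_, ?_⟩)
        · simp [gridCell]
        · exact mul_pos (Nat.cast_pos.2 hi) hδ
        · exact (mul_lt_mul_of_pos_right (Nat.cast_lt.2 hiN) hδ).trans_eq hend
    _ = eVariationOn f (Ioo 0 T) := by
        rw [Nat.cast_zero, zero_mul, hend, inter_eq_left.2 Ioo_subset_Icc_self]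

variable {E : Type*} [NormedAddCommGroup E] {N : ℕ}

noncomputable def gridStep (δ : ℝ) (c : Fin N → E) (t : ℝ) : E :=
  if h : ⌊t / δ⌋₊ < N then c ⟨⌊t / δ⌋₊, h⟩ else 0

lemma gridStep_mem {S : Set E} (h0 : 0 ∈ S) {c : Fin N → E} (hc : ∀ i, c i ∈ S) (t : ℝ) :
    gridStep δ c t ∈ S := by
  unfold gridStep
  split_ifs
  exacts [hc _, h0]

lemma memLp_gridStep {μ : Measure ℝ} [IsFiniteMeasure μ] (p : ℝ≥0∞) (c : Fin N → E) :
    MemLp (gridStep δ c) p μ := by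
  have hmeas : StronglyMeasurable (gridStep δ c) :=
    (StronglyMeasurable.of_discrete (f := fun k : ℕ => if h : k < N then c ⟨k, h⟩ else 0)
      ).comp_measurable (measurable_id.div_const δ).nat_floor
  refine MemLp.of_bound hmeas.aestronglyMeasurable (∑ i, ‖c i‖) (Eventually.of_forall fun t => ?_)
  unfold gridStep
  split_ifs
  · exact Finset.single_le_sum (fun i _ => norm_nonneg (c i)) (Finset.mem_univ _)
  · simpa using Finset.sum_nonneg fun i _ => norm_nonneg (c i)

end Grid

section GridApproximation

variable {n : ℕ} {T : ℝ} {N : ℕ} {v : ℝ → Fin n → ℝ}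

lemma card_nonconstant_gridCells_le (hT : 0 < T) (hN : 0 < N)
    (hv : ∀ t ∈ Ioo 0 T, v t ∈ binaryVectors n) {τ : Fin N → ℝ}
    (hτ : ∀ i : Fin N, τ i ∈ Ioo 0 T ∩ gridCell (T / N) i) {bad : Finset (Fin N)}
    (hbad : ∀ i ∈ bad, ∃ t ∈ Ioo 0 T ∩ gridCell (T / N) i, v t ≠ v (τ i)) :
    (#bad : ℝ≥0∞) ≤ ∑ j, eVariationOn (fun s => v s j) (Ioo 0 T) := by
  set W : ℕ → ℝ≥0∞ := fun i => ∑ j, eVariationOn (fun s => v s j) (Ioo 0 T ∩ gridCell (T / N) i)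
  calc (#bad : ℝ≥0∞) = ∑ _i ∈ bad, 1 := by simp
    _ ≤ ∑ i ∈ bad, W i := Finset.sum_le_sum fun i hi => by
        obtain ⟨t, ht, hne⟩ := hbad i hi
        exact one_le_sum_eVariationOn_of_ne (fun s hs => hv s hs.1) ht (hτ i) hne
    _ ≤ ∑ i : Fin N, W i := Finset.sum_le_sum_of_subset (Finset.subset_univ bad)
    _ = ∑ j, ∑ i ∈ Finset.range N,
          eVariationOn (fun s => v s j) (Ioo 0 T ∩ gridCell (T / N) i) := by
        rw [Fin.sum_univ_eq_sum_range W, Finset.sum_comm]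
    _ = ∑ j, eVariationOn (fun s => v s j) (Ioo 0 T) := by
        simp only [sum_eVariationOn_inter_gridCell _ hT hN]

lemma exists_gridStep_eq_off_small_set (hT : 0 < T) (hN : 0 < N)
    (hv : ∀ t ∈ Ioo 0 T, v t ∈ binaryVectors n) :
    ∃ c ∈ univ.pi fun _ : Fin N => binaryVectors n, ∃ B, MeasurableSet B ∧
      volume B ≤ (∑ j, eVariationOn (fun s => v s j) (Ioo 0 T)) * ENNReal.ofReal (T / N) ∧
      ∀ t ∈ Ioo 0 T \ B, v t = gridStep (T / N) c t := by
  set δ := T / N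
  have hδ : 0 < δ := div_pos hT (Nat.cast_pos.2 hN)
  have hNδ : (N : ℝ) * δ = T := mul_div_cancel₀ T (Nat.cast_ne_zero.2 hN.ne')
  have hτ (i : Fin N) : ((i : ℝ) + 1 / 2) * δ ∈ Ioo 0 T ∩ gridCell δ i := by
    have hiN : (i : ℝ) + 1 ≤ N := by exact_mod_cast i.isLt
    refine ⟨⟨by positivity, ?_⟩, ?_, ?_⟩ <;> nlinarith
  set c : Fin N → Fin n → ℝ := fun i => v (((i : ℝ) + 1 / 2) * δ)
  classical
  set bad : Finset (Fin N) := {i | ∃ t ∈ Ioo 0 T ∩ gridCell δ i, v t ≠ c i}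
  refine ⟨c, fun i _ => hv _ (hτ i).1, ⋃ i ∈ bad, gridCell δ i,
    Finset.measurableSet_biUnion _ fun _ _ => measurableSet_Icc, ?_, ?_⟩
  · calc volume (⋃ i ∈ bad, gridCell δ i) ≤ ∑ i ∈ bad, volume (gridCell δ i) :=
          measure_biUnion_finset_le _ _
      _ = #bad * ENNReal.ofReal δ := by simp [volume_gridCell]
      _ ≤ _ := by
          gcongr
          exact card_nonconstant_gridCells_le hT hN hv hτ fun i hi => (Finset.mem_filter.1 hi).2
  · rintro t ⟨ht, htB⟩
    have hi : ⌊t / δ⌋₊ < N := by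
      rw [Nat.floor_lt (div_nonneg ht.1.le hδ.le), div_lt_iff₀ hδ, hNδ]
      exact ht.2
    have hcell := mem_gridCell_floor hδ ht.1.le
    rw [gridStep, dif_pos hi]
    by_contra hne
    have hbad : (⟨_, hi⟩ : Fin N) ∈ bad :=
      Finset.mem_filter.2 ⟨Finset.mem_univ _, t, ⟨ht, hcell⟩, hne⟩
    exact htB (mem_biUnion hbad hcell)

end GridApproximation

def switchingControls (n : ℕ) (p : ℝ≥0∞) (T σ : ℝ) :
    Set (Lp (Fin n → ℝ) p (volume.restrict (Ioo (0 : ℝ) T))) :=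
  {u | ∃ v : ℝ → Fin n → ℝ, (u : ℝ → Fin n → ℝ) =ᵐ[volume.restrict (Ioo 0 T)] v ∧
    (∀ t ∈ Ioo 0 T, v t ∈ binaryVectors n) ∧
    ∑ j, eVariationOn (fun s => v s j) (Ioo 0 T) ≤ ENNReal.ofReal σ}

theorem totallyBounded_switchingControls {n : ℕ} {p : ℝ≥0∞} [Fact (1 ≤ p)] (hp : p ≠ ⊤)
    {T : ℝ} (hT : 0 < T) (σ : ℝ) : TotallyBounded (switchingControls n p T σ) := by
  set μ := volume.restrict (Ioo (0 : ℝ) T)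
  have : IsFiniteMeasure μ := isFiniteMeasure_restrict.2 measure_Ioo_lt_top.ne
  have hp0 : p ≠ 0 := (zero_lt_one.trans_le Fact.out).ne'
  have hpr : 0 < 1 / p.toReal := one_div_pos.2 (ENNReal.toReal_pos hp0 hp)
  rw [Metric.totallyBounded_iff]
  intro ε hε
  obtain ⟨N, hNε, hN⟩ := (((tendsto_ofReal_mul_div_rpow _ ENNReal.ofReal_ne_top T hpr).eventually
    (gt_mem_nhds (ENNReal.ofReal_pos.2 hε))).and (eventually_gt_atTop 0)).exists
  refine ⟨(fun c => (memLp_gridStep p c).toLp (gridStep (T / N) c)) ''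
      univ.pi (fun _ : Fin N => binaryVectors n),
    (Finite.pi fun _ => binaryVectors_finite).image _, ?_⟩
  rintro u ⟨v, huv, hv, hvar⟩
  obtain ⟨c, hc, B, hB, hBvol, hvB⟩ := exists_gridStep_eq_off_small_set hT hN hv
  refine mem_iUnion₂.2 ⟨_, mem_image_of_mem _ hc, ?_⟩
  have hbound : ∀ᵐ t ∂μ, ‖(v - gridStep (T / N) c) t‖ ≤ B.indicator 1 t := by
    filter_upwards [ae_restrict_mem measurableSet_Ioo] with t ht
    by_cases htB : t ∈ B
    · simpa [htB] using norm_sub_le_one_of_mem_binaryVectors (hv t ht)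
        (gridStep_mem zero_mem_binaryVectors (fun i => hc i (mem_univ i)) t)
    · simp [htB, hvB t ⟨ht, htB⟩]
  rw [Metric.mem_ball, Lp.dist_def, eLpNorm_congr_ae (huv.sub (memLp_gridStep p c).coeFn_toLp)]
  refine ENNReal.toReal_lt_of_lt_ofReal ?_
  calc eLpNorm (v - gridStep (T / N) c) p μ ≤ μ B ^ (1 / p.toReal) :=
        eLpNorm_le_measure_rpow_of_norm_le_indicator hp0 hp hB hbound
    _ ≤ (ENNReal.ofReal σ * ENNReal.ofReal (T / N)) ^ (1 / p.toReal) := by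
        gcongr
        exact (Measure.restrict_apply_le _ B).trans (hBvol.trans (by gcongr))
    _ < ENNReal.ofReal ε := hNε

theorem stmt_0
    (T : ℝ) (hT : 0 < T) (n : ℕ) (p : ℝ≥0∞) [Fact (1 ≤ p)] (hp : p ≠ ⊤)
    (σ : ℝ)
    (D : Set (Lp (Fin n → ℝ) p (volume.restrict (Ioo (0:ℝ) T))))
    (hne : D.Nonempty)
    (hD1 : ∀ u ∈ D, ∃ v : ℝ → Fin n → ℝ,
      ((u : ℝ → Fin n → ℝ) =ᵐ[volume.restrict (Ioo (0:ℝ) T)] v) ∧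
      (∀ t ∈ Ioo (0:ℝ) T, ∀ j, v t j = 0 ∨ v t j = 1) ∧
      (∑ j : Fin n, eVariationOn (fun s => v s j) (Ioo (0:ℝ) T)) ≤ ENNReal.ofReal σ)
    (hD2 : IsClosed D)
    (f : Lp (Fin n → ℝ) p (volume.restrict (Ioo (0:ℝ) T)) → ℝ)
    (hf : LowerSemicontinuous f) :
    ∃ u ∈ D, ∀ w ∈ D, f u ≤ f w := by
  have hD : D ⊆ switchingControls n p T σ := fun u hu => by
    obtain ⟨v, huv, hv, hvar⟩ := hD1 u hu
    exact ⟨v, huv, fun t ht => mem_binaryVectors.2 (hv t ht), hvar⟩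
  have hcomp : IsCompact D :=
    ((totallyBounded_switchingControls hp hT σ).subset hD).isCompact_of_isClosed hD2
  obtain ⟨u, hu, hmin⟩ := (hf.lowerSemicontinuousOn D).exists_isMinOn hne hcomp
  exact ⟨u, hu, fun w hw => hmin hw⟩
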